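/- arXiv:1906.03284 — 10 statements merged into one kernel-verified Lean document; each statement's English description precedes it below -/
import Mathlib

section
/- For every (γ1, γ2, p) with γ1 ∈ [0,1), γ2 ∈ [0,1) and p ∈ (0,1): if γ1 + γ2 < 1 then F(γ1, γ2, p) < 1, and if γ1 + γ2 = 1 then F(γ1, γ2, p) = 1. In particular F(0, 0, p) = 0 for all p ∈ (0,1). -/
noncomputable def F (γ1 γ2 p : ℝ) : ℝ :=
  γ1 * p / (γ1 * p + (1 - γ2) * (1 - p))
    - (1 - γ1) * p / ((1 - γ1) * p + γ2 * (1 - p)) + 1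

/-! Putting the two fractions of `F` over a common denominator, the cross terms in `γ1 * γ2`
and `(1 - γ1) * (1 - γ2)` leave the numerator `-p (1 - p) (1 - γ1 - γ2)`. Both denominators are
positive on the domain, so the sign of `F - 1` is the sign of `γ1 + γ2 - 1`; at `γ1 = γ2 = 0`
the quotient is `-1`. -/

section

variable {γ1 γ2 p : ℝ}

theorem F_sub_one (hA : γ1 * p + (1 - γ2) * (1 - p) ≠ 0)
    (hB : (1 - γ1) * p + γ2 * (1 - p) ≠ 0) :
    F γ1 γ2 p - 1 = -(p * (1 - p) * (1 - γ1 - γ2)) /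
      ((γ1 * p + (1 - γ2) * (1 - p)) * ((1 - γ1) * p + γ2 * (1 - p))) := by
  rw [F, add_sub_cancel_right, div_sub_div _ _ hA hB]
  ring

theorem F_denominators_pos (hγ1 : γ1 ∈ Set.Ico (0:ℝ) 1) (hγ2 : γ2 ∈ Set.Ico (0:ℝ) 1)
    (hp : p ∈ Set.Ioo (0:ℝ) 1) :
    0 < γ1 * p + (1 - γ2) * (1 - p) ∧ 0 < (1 - γ1) * p + γ2 * (1 - p) := by
  obtain ⟨h1₀, h1₁⟩ := hγ1
  obtain ⟨h2₀, h2₁⟩ := hγ2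
  obtain ⟨hp₀, hp₁⟩ := hp
  have hq : 0 < 1 - p := sub_pos.mpr hp₁
  constructor
  · have : 0 < (1 - γ2) * (1 - p) := mul_pos (sub_pos.mpr h2₁) hq
    nlinarith
  · have : 0 < (1 - γ1) * p := mul_pos (sub_pos.mpr h1₁) hp₀
    nlinarith

end

theorem stmt_2 (γ1 γ2 p : ℝ)
    (hγ1 : γ1 ∈ Set.Ico (0:ℝ) 1) (hγ2 : γ2 ∈ Set.Ico (0:ℝ) 1)
    (hp : p ∈ Set.Ioo (0:ℝ) 1) :
    (γ1 + γ2 < 1 → F γ1 γ2 p < 1) ∧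
    (γ1 + γ2 = 1 → F γ1 γ2 p = 1) ∧
    (∀ q : ℝ, q ∈ Set.Ioo (0:ℝ) 1 → F 0 0 q = 0) := by
  obtain ⟨hA, hB⟩ := F_denominators_pos hγ1 hγ2 hp
  have hF := F_sub_one hA.ne' hB.ne'
  refine ⟨fun hs => ?_, fun hs => ?_, fun q hq => ?_⟩
  · have hnum : 0 < p * (1 - p) * (1 - γ1 - γ2) :=
      mul_pos (mul_pos hp.1 (sub_pos.mpr hp.2)) (by linarith)
    have : F γ1 γ2 p - 1 < 0 := hF ▸ div_neg_of_neg_of_pos (neg_neg_of_pos hnum) (mul_pos hA hB)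
    linarith
  · rw [show 1 - γ1 - γ2 = 0 by linarith, mul_zero, neg_zero, zero_div] at hF
    linarith
  · have h0 : (0:ℝ) ∈ Set.Ico (0:ℝ) 1 := ⟨le_rfl, one_pos⟩
    obtain ⟨hA₀, hB₀⟩ := F_denominators_pos h0 h0 hq
    have hF₀ := F_sub_one hA₀.ne' hB₀.ne'
    have hden : (0 * q + (1 - 0) * (1 - q)) * ((1 - 0) * q + 0 * (1 - q))
        = q * (1 - q) * (1 - 0 - 0) := by ring
    rw [hden, neg_div, div_self (hden ▸ (mul_pos hA₀ hB₀).ne')] at hF₀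
    linarith
end

section
/- F is strictly increasing in each of its first two arguments on D: for all p ∈ (0,1) and γ2 ∈ [0,1), if 0 ≤ γ1 < γ1' < 1 then F(γ1, γ2, p) < F(γ1', γ2, p); and for all p ∈ (0,1) and γ1 ∈ [0,1), if 0 ≤ γ2 < γ2' < 1 then F(γ1, γ2, p) < F(γ1, γ2', p). -/
/-! Both fractions in `F` have the shape `x / (x + c)`, which is increasing in `x` and decreasing
in `c`. Raising `γ1` raises `x` in the first fraction and lowers it in the subtracted one; raising
`γ2` lowers `c` in the first and raises it in the subtracted one. In each case one of the two
changes is strict; the other may be trivial, when `γ2 = 0` resp. `γ1 = 0`. -/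

section DivAdd

variable {K : Type*} [Field K] [LinearOrder K] [IsStrictOrderedRing K] {x y c : K}

theorem div_add_lt_div_add_of_lt (hx : 0 ≤ x) (hxy : x < y) (hc : 0 < c) :
    x / (x + c) < y / (y + c) := by
  rw [div_lt_div_iff₀ (by linarith) (by linarith)]
  nlinarith

theorem div_add_le_div_add_of_le (hx : 0 < x) (hxy : x ≤ y) (hc : 0 ≤ c) :
    x / (x + c) ≤ y / (y + c) := by
  rw [div_le_div_iff₀ (by linarith) (by linarith)]
  nlinarith

end DivAdd

theorem F_lt_F_of_lt_left {p γ1 γ1' γ2 : ℝ} (hp : p ∈ Set.Ioo 0 1) (hγ2 : γ2 ∈ Set.Ico 0 1)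
    (hγ1 : 0 ≤ γ1) (hlt : γ1 < γ1') (hγ1' : γ1' < 1) : F γ1 γ2 p < F γ1' γ2 p := by
  obtain ⟨hp₀, hp₁⟩ := hp
  obtain ⟨hγ2₀, hγ2₁⟩ := hγ2
  have hfirst : γ1 * p / (γ1 * p + (1 - γ2) * (1 - p))
      < γ1' * p / (γ1' * p + (1 - γ2) * (1 - p)) :=
    div_add_lt_div_add_of_lt (mul_nonneg hγ1 hp₀.le) (by gcongr)
      (mul_pos (sub_pos.2 hγ2₁) (sub_pos.2 hp₁))
  have hsecond : (1 - γ1') * p / ((1 - γ1') * p + γ2 * (1 - p))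
      ≤ (1 - γ1) * p / ((1 - γ1) * p + γ2 * (1 - p)) :=
    div_add_le_div_add_of_le (mul_pos (sub_pos.2 hγ1') hp₀) (by gcongr)
      (mul_nonneg hγ2₀ (sub_pos.2 hp₁).le)
  unfold F
  linarith

theorem F_lt_F_of_lt_right {p γ1 γ2 γ2' : ℝ} (hp : p ∈ Set.Ioo 0 1) (hγ1 : γ1 ∈ Set.Ico 0 1)
    (hγ2 : 0 ≤ γ2) (hlt : γ2 < γ2') (hγ2' : γ2' < 1) : F γ1 γ2 p < F γ1 γ2' p := by
  obtain ⟨hp₀, hp₁⟩ := hp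
  obtain ⟨hγ1₀, hγ1₁⟩ := hγ1
  have hfirst : γ1 * p / (γ1 * p + (1 - γ2) * (1 - p))
      ≤ γ1 * p / (γ1 * p + (1 - γ2') * (1 - p)) :=
    div_le_div_of_nonneg_left (mul_nonneg hγ1₀ hp₀.le)
      (add_pos_of_nonneg_of_pos (mul_nonneg hγ1₀ hp₀.le)
        (mul_pos (sub_pos.2 hγ2') (sub_pos.2 hp₁)))
      (by gcongr)
  have hsecond : (1 - γ1) * p / ((1 - γ1) * p + γ2' * (1 - p))
      < (1 - γ1) * p / ((1 - γ1) * p + γ2 * (1 - p)) :=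
    div_lt_div_of_pos_left (mul_pos (sub_pos.2 hγ1₁) hp₀)
      (add_pos_of_pos_of_nonneg (mul_pos (sub_pos.2 hγ1₁) hp₀)
        (mul_nonneg hγ2 (sub_pos.2 hp₁).le))
      (by gcongr)
  unfold F
  linarith

theorem stmt_4 :
    (∀ p γ2 γ1 γ1' : ℝ, p ∈ Set.Ioo (0:ℝ) 1 → γ2 ∈ Set.Ico (0:ℝ) 1 →
      0 ≤ γ1 → γ1 < γ1' → γ1' < 1 → F γ1 γ2 p < F γ1' γ2 p) ∧
    (∀ p γ1 γ2 γ2' : ℝ, p ∈ Set.Ioo (0:ℝ) 1 → γ1 ∈ Set.Ico (0:ℝ) 1 →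
      0 ≤ γ2 → γ2 < γ2' → γ2' < 1 → F γ1 γ2 p < F γ1 γ2' p) :=
  ⟨fun _ _ _ _ => F_lt_F_of_lt_left, fun _ _ _ _ => F_lt_F_of_lt_right⟩
end

section
/- If in addition p10, p11, q0, q1 all lie in [0,1], then under the single equalized-odds constraint (p10 − q0)·e + q0 = (p11 − q1)·f + q1 the bias of the derived predictor for the class Y=1 is bounded as |α1·(p10 − q0) − β1·(p11 − q1) + q0 − q1| ≤ |α1 − β1| · ( w0 + 1 − w1 ). -/
/-! The equalized-odds constraint lets one eliminate `q0 - q1` from the bias, which then factors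
as `(α1 - β1) * ((1 - w1) * (p11 - q1) + w0 * (p10 - q0))`. Both differences `p - q` of
probabilities lie in `[-1, 1]`, so the second factor has absolute value at most `w0 + (1 - w1)`. -/

theorem bias_eq_of_equalizedOdds {R : Type*} [CommRing R] {α1 β1 w0 w1 p10 p11 q0 q1 : R}
    (hcon : (p10 - q0) * (α1 + (β1 - α1) * w0) + q0
          = (p11 - q1) * (α1 + (β1 - α1) * w1) + q1) :
    α1 * (p10 - q0) - β1 * (p11 - q1) + q0 - q1
      = (α1 - β1) * ((1 - w1) * (p11 - q1) + w0 * (p10 - q0)) := by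
  linear_combination hcon

theorem abs_sub_le_one_of_mem_Icc {x y : ℝ} (hx : x ∈ Set.Icc (0 : ℝ) 1)
    (hy : y ∈ Set.Icc (0 : ℝ) 1) : |x - y| ≤ 1 := by
  simpa only [Real.dist_eq] using Real.dist_le_of_mem_Icc_01 hx hy

theorem abs_mul_add_mul_le_add {a b x y : ℝ} (ha : 0 ≤ a) (hb : 0 ≤ b)
    (hx : |x| ≤ 1) (hy : |y| ≤ 1) : |a * x + b * y| ≤ a + b :=
  calc |a * x + b * y| ≤ |a * x| + |b * y| := abs_add_le _ _
    _ = a * |x| + b * |y| := by rw [abs_mul, abs_mul, abs_of_nonneg ha, abs_of_nonneg hb]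
    _ ≤ a + b := add_le_add (mul_le_of_le_one_right ha hx) (mul_le_of_le_one_right hb hy)

theorem stmt_6_general (α1 β1 w0 w1 p10 p11 q0 q1 : ℝ)
    (hw0 : w0 ∈ Set.Icc (0:ℝ) 1) (hw1 : w1 ∈ Set.Icc (0:ℝ) 1)
    (hp10 : p10 ∈ Set.Icc (0:ℝ) 1) (hp11 : p11 ∈ Set.Icc (0:ℝ) 1)
    (hq0 : q0 ∈ Set.Icc (0:ℝ) 1) (hq1 : q1 ∈ Set.Icc (0:ℝ) 1)
    (hcon : (p10 - q0) * (α1 + (β1 - α1) * w0) + q0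
          = (p11 - q1) * (α1 + (β1 - α1) * w1) + q1) :
    |α1 * (p10 - q0) - β1 * (p11 - q1) + q0 - q1|
      ≤ |α1 - β1| * (w0 + 1 - w1) := by
  rw [bias_eq_of_equalizedOdds hcon, abs_mul]
  have hmix : |(1 - w1) * (p11 - q1) + w0 * (p10 - q0)| ≤ w0 + 1 - w1 := by
    have := abs_mul_add_mul_le_add (sub_nonneg.mpr hw1.2) hw0.1
      (abs_sub_le_one_of_mem_Icc hp11 hq1) (abs_sub_le_one_of_mem_Icc hp10 hq0)
    linarith
  exact mul_le_mul_of_nonneg_left hmix (abs_nonneg _)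

theorem stmt_6 (α1 β1 w0 w1 p10 p11 q0 q1 : ℝ)
    (hα1 : α1 ∈ Set.Icc (0:ℝ) 1) (hβ1 : β1 ∈ Set.Icc (0:ℝ) 1)
    (hw0 : w0 ∈ Set.Icc (0:ℝ) 1) (hw1 : w1 ∈ Set.Icc (0:ℝ) 1)
    (hp10 : p10 ∈ Set.Icc (0:ℝ) 1) (hp11 : p11 ∈ Set.Icc (0:ℝ) 1)
    (hq0 : q0 ∈ Set.Icc (0:ℝ) 1) (hq1 : q1 ∈ Set.Icc (0:ℝ) 1)
    (hcon : (p10 - q0) * (α1 + (β1 - α1) * w0) + q0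
          = (p11 - q1) * (α1 + (β1 - α1) * w1) + q1) :
    |α1 * (p10 - q0) - β1 * (p11 - q1) + q0 - q1|
      ≤ |α1 - β1| * (w0 + 1 - w1) :=
  stmt_6_general α1 β1 w0 w1 p10 p11 q0 q1 hw0 hw1 hp10 hp11 hq0 hq1 hcon
end

section
/- (Core of Theorem 1, class Y=1.) Let γ0, γ1 ∈ [0,1) be the perturbation probabilities P[A_c≠A | Y=1, A=0] and P[A_c≠A | Y=1, A=1], let π ∈ (0,1) be P[A=1 | Y=1], and set w0 = γ1·π/(γ1·π + (1−γ0)·(1−π)) and w1 = (1−γ1)·π/((1−γ1)·π + γ0·(1−π)). If p10, p11, q0, q1 ∈ [0,1] satisfy the constraint (p10 − q0)·e + q0 = (p11 − q1)·f + q1 with e = α1 + (β1−α1)·w0 and f = α1 + (β1−α1)·w1, then |α1·(p10 − q0) − β1·(p11 − q1) + q0 − q1| ≤ |α1 − β1| · F(γ1, γ0, π). -/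
lemma abs_mul_add_mul_le_add_s7 {R : Type*} [CommRing R] [LinearOrder R] [IsStrictOrderedRing R]
    {x y u v : R} (hx : |x| ≤ 1) (hy : |y| ≤ 1) (hu : 0 ≤ u) (hv : 0 ≤ v) :
    |x * u + y * v| ≤ u + v :=
  calc |x * u + y * v| ≤ |x| * u + |y| * v := by
        simpa only [abs_mul, abs_of_nonneg hu, abs_of_nonneg hv] using abs_add_le (x * u) (y * v)
    _ ≤ 1 * u + 1 * v := by gcongr
    _ = u + v := by ring

lemma bias_eq_of_constraint {α β w0 w1 x y q0 q1 : ℝ}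
    (h : x * (α + (β - α) * w0) + q0 = y * (α + (β - α) * w1) + q1) :
    α * x - β * y + q0 - q1 = (α - β) * (x * w0 + y * (1 - w1)) := by
  linear_combination h

theorem stmt_7_general (α1 β1 γ0 γ1 π w0 w1 p10 p11 q0 q1 : ℝ)
    (hγ0 : γ0 ∈ Set.Ico (0:ℝ) 1) (hγ1 : γ1 ∈ Set.Ico (0:ℝ) 1)
    (hπ : π ∈ Set.Ioo (0:ℝ) 1)
    (hw0 : w0 = γ1 * π / (γ1 * π + (1 - γ0) * (1 - π)))
    (hw1 : w1 = (1 - γ1) * π / ((1 - γ1) * π + γ0 * (1 - π)))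
    (hp10 : p10 ∈ Set.Icc (0:ℝ) 1) (hp11 : p11 ∈ Set.Icc (0:ℝ) 1)
    (hq0 : q0 ∈ Set.Icc (0:ℝ) 1) (hq1 : q1 ∈ Set.Icc (0:ℝ) 1)
    (hcon : (p10 - q0) * (α1 + (β1 - α1) * w0) + q0
          = (p11 - q1) * (α1 + (β1 - α1) * w1) + q1) :
    |α1 * (p10 - q0) - β1 * (p11 - q1) + q0 - q1|
      ≤ |α1 - β1| * F γ1 γ0 π := by
  obtain ⟨hγ0_nonneg, hγ0_lt_one⟩ := hγ0
  obtain ⟨hγ1_nonneg, hγ1_lt_one⟩ := hγ1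
  obtain ⟨hπ_pos, hπ_lt_one⟩ := hπ
  have hw0_nonneg : 0 ≤ w0 := hw0 ▸ div_nonneg (by positivity)
    (add_nonneg (by positivity) (mul_nonneg (by linarith) (by linarith)))
  have hw1_le_one : w1 ≤ 1 := hw1 ▸ div_le_one_of_le₀
    (le_add_of_nonneg_right (mul_nonneg hγ0_nonneg (by linarith)))
    (add_nonneg (mul_nonneg (by linarith) hπ_pos.le) (mul_nonneg hγ0_nonneg (by linarith)))
  have hF : F γ1 γ0 π = w0 + (1 - w1) := by rw [F, hw0, hw1]; ring
  rw [bias_eq_of_constraint hcon, abs_mul, hF]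
  exact mul_le_mul_of_nonneg_left
    (abs_mul_add_mul_le_add_s7 (abs_sub_le_of_nonneg_of_le hp10.1 hp10.2 hq0.1 hq0.2)
      (abs_sub_le_of_nonneg_of_le hp11.1 hp11.2 hq1.1 hq1.2) hw0_nonneg (sub_nonneg.2 hw1_le_one))
    (abs_nonneg _)

theorem stmt_7 (α1 β1 γ0 γ1 π w0 w1 p10 p11 q0 q1 : ℝ)
    (hα1 : α1 ∈ Set.Icc (0:ℝ) 1) (hβ1 : β1 ∈ Set.Icc (0:ℝ) 1)
    (hγ0 : γ0 ∈ Set.Ico (0:ℝ) 1) (hγ1 : γ1 ∈ Set.Ico (0:ℝ) 1)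
    (hπ : π ∈ Set.Ioo (0:ℝ) 1)
    (hw0 : w0 = γ1 * π / (γ1 * π + (1 - γ0) * (1 - π)))
    (hw1 : w1 = (1 - γ1) * π / ((1 - γ1) * π + γ0 * (1 - π)))
    (hp10 : p10 ∈ Set.Icc (0:ℝ) 1) (hp11 : p11 ∈ Set.Icc (0:ℝ) 1)
    (hq0 : q0 ∈ Set.Icc (0:ℝ) 1) (hq1 : q1 ∈ Set.Icc (0:ℝ) 1)
    (hcon : (p10 - q0) * (α1 + (β1 - α1) * w0) + q0
          = (p11 - q1) * (α1 + (β1 - α1) * w1) + q1) :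
    |α1 * (p10 - q0) - β1 * (p11 - q1) + q0 - q1|
      ≤ |α1 - β1| * F γ1 γ0 π :=
  stmt_7_general α1 β1 γ0 γ1 π w0 w1 p10 p11 q0 q1 hγ0 hγ1 hπ hw0 hw1 hp10 hp11 hq0 hq1 hcon
end

section
/- (Bias reduction under bounded perturbation.) In the setting of the previous statement, if moreover γ0 + γ1 ≤ 1, then |α1·(p10 − q0) − β1·(p11 − q1) + q0 − q1| ≤ |α1 − β1|; and if γ0 + γ1 < 1 and α1 ≠ β1, then the inequality is strict. -/
/-!
The equalized-odds constraint, expanded with `e = α + (β - α) w₀` and `f = α + (β - α) w₁`,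
says exactly that the new bias equals `(α - β) (a w₀ + b (1 - w₁))` with
`a = p₁₀ - q₀, b = p₁₁ - q₁ ∈ [-1, 1]`, so its modulus is at most `|α - β| (1 - (w₁ - w₀))`.
The weights have the form `x π / (x π + y (1 - π))`, and cross-multiplying shows that
`w₀ ≤ w₁` iff `γ₀ γ₁ ≤ (1 - γ₀)(1 - γ₁)`, i.e. iff `γ₀ + γ₁ ≤ 1` (strictly likewise).
-/

open Set

theorem bias_eq_of_constraint_s8 {α β w₀ w₁ a b q₀ q₁ : ℝ}
    (h : a * (α + (β - α) * w₀) + q₀ = b * (α + (β - α) * w₁) + q₁) :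
    α * a - β * b + q₀ - q₁ = (α - β) * (a * w₀ + b * (1 - w₁)) := by
  linear_combination h

theorem abs_mul_add_mul_le_add_s8 {a b s t : ℝ} (ha : |a| ≤ 1) (hb : |b| ≤ 1)
    (hs : 0 ≤ s) (ht : 0 ≤ t) : |a * s + b * t| ≤ s + t :=
  calc |a * s + b * t| ≤ |a| * s + |b| * t := by
        simpa only [abs_mul, abs_of_nonneg hs, abs_of_nonneg ht] using abs_add_le (a * s) (b * t)
    _ ≤ 1 * s + 1 * t := by gcongr
    _ = s + t := by ring

theorem abs_bias_le_of_constraint {α β w₀ w₁ p₁₀ p₁₁ q₀ q₁ : ℝ}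
    (hw₀ : 0 ≤ w₀) (hw₁ : w₁ ≤ 1) (hp₁₀ : p₁₀ ∈ Icc (0 : ℝ) 1) (hp₁₁ : p₁₁ ∈ Icc (0 : ℝ) 1)
    (hq₀ : q₀ ∈ Icc (0 : ℝ) 1) (hq₁ : q₁ ∈ Icc (0 : ℝ) 1)
    (h : (p₁₀ - q₀) * (α + (β - α) * w₀) + q₀ = (p₁₁ - q₁) * (α + (β - α) * w₁) + q₁) :
    |α * (p₁₀ - q₀) - β * (p₁₁ - q₁) + q₀ - q₁| ≤ |α - β| * (1 - (w₁ - w₀)) := by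
  have ha : |p₁₀ - q₀| ≤ 1 := abs_sub_le_of_nonneg_of_le hp₁₀.1 hp₁₀.2 hq₀.1 hq₀.2
  have hb : |p₁₁ - q₁| ≤ 1 := abs_sub_le_of_nonneg_of_le hp₁₁.1 hp₁₁.2 hq₁.1 hq₁.2
  rw [bias_eq_of_constraint_s8 h, abs_mul]
  gcongr
  linarith [abs_mul_add_mul_le_add_s8 ha hb hw₀ (sub_nonneg.2 hw₁)]

section MixtureWeight

variable {π x y x' y' : ℝ}

theorem mixture_cross_sub_eq :
    x' * π * (x * π + y * (1 - π)) - x * π * (x' * π + y' * (1 - π))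
      = (x' * y - x * y') * (π * (1 - π)) := by
  ring

theorem mixture_weight_le_iff (hπ : π ∈ Ioo (0 : ℝ) 1) (hd : 0 < x * π + y * (1 - π))
    (hd' : 0 < x' * π + y' * (1 - π)) :
    x * π / (x * π + y * (1 - π)) ≤ x' * π / (x' * π + y' * (1 - π)) ↔ x * y' ≤ x' * y := by
  rw [div_le_div_iff₀ hd hd', ← sub_nonneg, mixture_cross_sub_eq,
    mul_nonneg_iff_of_pos_right (mul_pos hπ.1 (sub_pos.2 hπ.2)), sub_nonneg]

theorem mixture_weight_lt_iff (hπ : π ∈ Ioo (0 : ℝ) 1) (hd : 0 < x * π + y * (1 - π))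
    (hd' : 0 < x' * π + y' * (1 - π)) :
    x * π / (x * π + y * (1 - π)) < x' * π / (x' * π + y' * (1 - π)) ↔ x * y' < x' * y := by
  rw [div_lt_div_iff₀ hd hd', ← sub_pos, mixture_cross_sub_eq,
    mul_pos_iff_of_pos_right (mul_pos hπ.1 (sub_pos.2 hπ.2)), sub_pos]

end MixtureWeight

theorem stmt_8_general (α1 β1 γ0 γ1 π w0 w1 p10 p11 q0 q1 : ℝ)
    (hγ0 : γ0 ∈ Set.Ico (0:ℝ) 1) (hγ1 : γ1 ∈ Set.Ico (0:ℝ) 1)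
    (hπ : π ∈ Set.Ioo (0:ℝ) 1)
    (hw0 : w0 = γ1 * π / (γ1 * π + (1 - γ0) * (1 - π)))
    (hw1 : w1 = (1 - γ1) * π / ((1 - γ1) * π + γ0 * (1 - π)))
    (hp10 : p10 ∈ Set.Icc (0:ℝ) 1) (hp11 : p11 ∈ Set.Icc (0:ℝ) 1)
    (hq0 : q0 ∈ Set.Icc (0:ℝ) 1) (hq1 : q1 ∈ Set.Icc (0:ℝ) 1)
    (hcon : (p10 - q0) * (α1 + (β1 - α1) * w0) + q0
          = (p11 - q1) * (α1 + (β1 - α1) * w1) + q1) :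
    (γ0 + γ1 ≤ 1 →
      |α1 * (p10 - q0) - β1 * (p11 - q1) + q0 - q1| ≤ |α1 - β1|) ∧
    (γ0 + γ1 < 1 → α1 ≠ β1 →
      |α1 * (p10 - q0) - β1 * (p11 - q1) + q0 - q1| < |α1 - β1|) := by
  have hd₀ : 0 < γ1 * π + (1 - γ0) * (1 - π) :=
    add_pos_of_nonneg_of_pos (mul_nonneg hγ1.1 hπ.1.le) (mul_pos (sub_pos.2 hγ0.2) (sub_pos.2 hπ.2))
  have hd₁ : 0 < (1 - γ1) * π + γ0 * (1 - π) :=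
    add_pos_of_pos_of_nonneg (mul_pos (sub_pos.2 hγ1.2) hπ.1) (mul_nonneg hγ0.1 (sub_pos.2 hπ.2).le)
  have hw₀ : 0 ≤ w0 := hw0 ▸ div_nonneg (mul_nonneg hγ1.1 hπ.1.le) hd₀.le
  have hw₁ : w1 ≤ 1 :=
    hw1 ▸ div_le_one_of_le₀ (le_add_of_nonneg_right (mul_nonneg hγ0.1 (sub_pos.2 hπ.2).le)) hd₁.le
  have hbias := abs_bias_le_of_constraint hw₀ hw₁ hp10 hp11 hq0 hq1 hcon
  constructor
  · intro hγ
    have hw : w0 ≤ w1 := by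
      rw [hw0, hw1, mixture_weight_le_iff hπ hd₀ hd₁]
      linear_combination hγ
    exact hbias.trans (mul_le_of_le_one_right (abs_nonneg _) (by linarith))
  · intro hγ hαβ
    have hw : w0 < w1 := by
      rw [hw0, hw1, mixture_weight_lt_iff hπ hd₀ hd₁]
      linear_combination hγ
    exact hbias.trans_lt
      (mul_lt_of_lt_one_right (abs_pos.2 (sub_ne_zero.2 hαβ)) (by linarith))

theorem stmt_8 (α1 β1 γ0 γ1 π w0 w1 p10 p11 q0 q1 : ℝ)
    (hα1 : α1 ∈ Set.Icc (0:ℝ) 1) (hβ1 : β1 ∈ Set.Icc (0:ℝ) 1)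
    (hγ0 : γ0 ∈ Set.Ico (0:ℝ) 1) (hγ1 : γ1 ∈ Set.Ico (0:ℝ) 1)
    (hπ : π ∈ Set.Ioo (0:ℝ) 1)
    (hw0 : w0 = γ1 * π / (γ1 * π + (1 - γ0) * (1 - π)))
    (hw1 : w1 = (1 - γ1) * π / ((1 - γ1) * π + γ0 * (1 - π)))
    (hp10 : p10 ∈ Set.Icc (0:ℝ) 1) (hp11 : p11 ∈ Set.Icc (0:ℝ) 1)
    (hq0 : q0 ∈ Set.Icc (0:ℝ) 1) (hq1 : q1 ∈ Set.Icc (0:ℝ) 1)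
    (hcon : (p10 - q0) * (α1 + (β1 - α1) * w0) + q0
          = (p11 - q1) * (α1 + (β1 - α1) * w1) + q1) :
    (γ0 + γ1 ≤ 1 →
      |α1 * (p10 - q0) - β1 * (p11 - q1) + q0 - q1| ≤ |α1 - β1|) ∧
    (γ0 + γ1 < 1 → α1 ≠ β1 →
      |α1 * (p10 - q0) - β1 * (p11 - q1) + q0 - q1| < |α1 - β1|) :=
  stmt_8_general α1 β1 γ0 γ1 π w0 w1 p10 p11 q0 q1 hγ0 hγ1 hπ hw0 hw1 hp10 hp11 hq0 hq1 hcon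
end

section
/- (Balanced case: difference of the two '−1' mixing probabilities.) Suppose real numbers p10, p11, q0, q1 satisfy the two balanced equalized-odds constraints (p10 − q0)·((1−γ)α1 + γβ1) + q0 = (p11 − q1)·((1−γ)β1 + γα1) + q1 and (p10 − q0)·((1−γ)α2 + γβ2) + q0 = (p11 − q1)·((1−γ)β2 + γα2) + q1, and that u ≠ 0 and v ≠ 0. Then (p10 − q0)·u = (p11 − q1)·v, and with Δ := (p10 − q0)·u one has q0 − q1 = Δ·(1−2γ)·(α2·β1 − α1·β2)/(2·u·v). -/
/-!
Subtracting the two constraints eliminates `q0, q1` and gives the first identity. Either constraint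
then expresses `q0 - q1` through `p10 - q0` alone, with the 2×2 determinant of the perturbed rates
as numerator; mixing the two groups with weights `1 - γ` and `γ` multiplies the determinant
`α2 β1 - α1 β2` by `(1 - γ)² - γ² = 1 - 2γ`.
-/

section AffineConstraints

variable {K : Type*} [Field K] {a b q₀ q₁ A₁ A₂ B₁ B₂ : K}

theorem mul_sub_eq_mul_sub_of_affine_eq (h₁ : a * A₁ + q₀ = b * B₁ + q₁)
    (h₂ : a * A₂ + q₀ = b * B₂ + q₁) : a * (A₂ - A₁) = b * (B₂ - B₁) := by
  linear_combination h₂ - h₁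

theorem sub_eq_mul_det_div_of_affine_eq (h₁ : a * A₁ + q₀ = b * B₁ + q₁)
    (h₂ : a * A₂ + q₀ = b * B₂ + q₁) (hB : B₂ - B₁ ≠ 0) :
    q₀ - q₁ = a * (A₂ * B₁ - A₁ * B₂) / (B₂ - B₁) := by
  rw [eq_div_iff hB]
  linear_combination (B₂ - B₁) * h₁ - B₁ * mul_sub_eq_mul_sub_of_affine_eq h₁ h₂

end AffineConstraints

theorem mix_det_eq_one_sub_two_mul_det {R : Type*} [CommRing R] (γ α₁ α₂ β₁ β₂ : R) :
    ((1 - γ) * α₂ + γ * β₂) * ((1 - γ) * β₁ + γ * α₁)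
      - ((1 - γ) * α₁ + γ * β₁) * ((1 - γ) * β₂ + γ * α₂)
      = (1 - 2 * γ) * (α₂ * β₁ - α₁ * β₂) := by
  ring

theorem stmt_12_general (α1 α2 β1 β2 γ p10 p11 q0 q1 : ℝ)
    (hcon1 : (p10 - q0) * ((1 - γ) * α1 + γ * β1) + q0
           = (p11 - q1) * ((1 - γ) * β1 + γ * α1) + q1)
    (hcon2 : (p10 - q0) * ((1 - γ) * α2 + γ * β2) + q0
           = (p11 - q1) * ((1 - γ) * β2 + γ * α2) + q1)
    (hu : ((1 - γ) * (α2 - α1) + γ * (β2 - β1)) / 2 ≠ 0)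
    (hv : ((1 - γ) * (β2 - β1) + γ * (α2 - α1)) / 2 ≠ 0) :
    (p10 - q0) * (((1 - γ) * (α2 - α1) + γ * (β2 - β1)) / 2)
      = (p11 - q1) * (((1 - γ) * (β2 - β1) + γ * (α2 - α1)) / 2) ∧
    q0 - q1 = ((p10 - q0) * (((1 - γ) * (α2 - α1) + γ * (β2 - β1)) / 2))
        * (1 - 2 * γ) * (α2 * β1 - α1 * β2) /
        (2 * (((1 - γ) * (α2 - α1) + γ * (β2 - β1)) / 2)
           * (((1 - γ) * (β2 - β1) + γ * (α2 - α1)) / 2)) := by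
  set u := ((1 - γ) * (α2 - α1) + γ * (β2 - β1)) / 2
  set v := ((1 - γ) * (β2 - β1) + γ * (α2 - α1)) / 2
  refine ⟨by linear_combination mul_sub_eq_mul_sub_of_affine_eq hcon1 hcon2 / 2, ?_⟩
  have hB : (1 - γ) * β2 + γ * α2 - ((1 - γ) * β1 + γ * α1) = 2 * v := by ring
  rw [sub_eq_mul_det_div_of_affine_eq hcon1 hcon2 (hB ▸ mul_ne_zero two_ne_zero hv),
    mix_det_eq_one_sub_two_mul_det, hB]
  field_simp

theorem stmt_12 (α1 α2 β1 β2 γ p10 p11 q0 q1 : ℝ)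
    (hα1 : α1 ∈ Set.Icc (0:ℝ) 1) (hα2 : α2 ∈ Set.Icc (0:ℝ) 1)
    (hβ1 : β1 ∈ Set.Icc (0:ℝ) 1) (hβ2 : β2 ∈ Set.Icc (0:ℝ) 1)
    (hγ : γ ∈ Set.Icc (0:ℝ) 1)
    (hcon1 : (p10 - q0) * ((1 - γ) * α1 + γ * β1) + q0
           = (p11 - q1) * ((1 - γ) * β1 + γ * α1) + q1)
    (hcon2 : (p10 - q0) * ((1 - γ) * α2 + γ * β2) + q0
           = (p11 - q1) * ((1 - γ) * β2 + γ * α2) + q1)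
    (hu : ((1 - γ) * (α2 - α1) + γ * (β2 - β1)) / 2 ≠ 0)
    (hv : ((1 - γ) * (β2 - β1) + γ * (α2 - α1)) / 2 ≠ 0) :
    (p10 - q0) * (((1 - γ) * (α2 - α1) + γ * (β2 - β1)) / 2)
      = (p11 - q1) * (((1 - γ) * (β2 - β1) + γ * (α2 - α1)) / 2) ∧
    q0 - q1 = ((p10 - q0) * (((1 - γ) * (α2 - α1) + γ * (β2 - β1)) / 2))
        * (1 - 2 * γ) * (α2 * β1 - α1 * β2) /
        (2 * (((1 - γ) * (α2 - α1) + γ * (β2 - β1)) / 2)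
           * (((1 - γ) * (β2 - β1) + γ * (α2 - α1)) / 2)) :=
  stmt_12_general α1 α2 β1 β2 γ p10 p11 q0 q1 hcon1 hcon2 hu hv
end

section
/- (Balanced case: ordering of the '−1' mixing probabilities in an equalized odds solution.) In the setting of the previous statement, if moreover α1 > α2, β1 > β2, γ ∈ [0,1/2], α2·β1 ≥ α1·β2, and Δ := (p10 − q0)·u ≤ 0, then q0 − q1 ≤ 0, i.e. p_{−1,0} ≤ p_{−1,1}. -/
/-!
Eliminating `p11 - q1` from the two constraints gives
`(q0 - q1) * (B₁ - B₂) = (p10 - q0) * (1 - 2γ) * (α1 β2 - α2 β1)`, where `Bᵢ` are the perturbed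
rates of group `A = 1`. Since `u < 0`, `Δ ≤ 0` forces `p10 ≥ q0`; since `B₁ > B₂`, the sign of
`q0 - q1` is then that of `α1 β2 - α2 β1 ≤ 0`.
-/

lemma mix_lt_mix {γ a₁ a₂ b₁ b₂ : ℝ} (hγ₀ : 0 ≤ γ) (hγ₁ : γ ≤ 1) (ha : a₂ < a₁) (hb : b₂ < b₁) :
    (1 - γ) * a₂ + γ * b₂ < (1 - γ) * a₁ + γ * b₁ := by
  nlinarith [mul_nonneg hγ₀ (sub_pos.2 hb).le, mul_nonneg (sub_nonneg.2 hγ₁) (sub_pos.2 ha).le]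

/-- The mixing matrix `!![1 - γ, γ; γ, 1 - γ]` has determinant `1 - 2γ`. -/
lemma mix_det (γ a₁ a₂ b₁ b₂ : ℝ) :
    ((1 - γ) * a₁ + γ * b₁) * ((1 - γ) * b₂ + γ * a₂)
      - ((1 - γ) * a₂ + γ * b₂) * ((1 - γ) * b₁ + γ * a₁)
      = (1 - 2 * γ) * (a₁ * b₂ - a₂ * b₁) := by
  ring

lemma sub_mul_sub_eq_of_affine_eq {x y c d A₁ A₂ B₁ B₂ : ℝ}
    (h₁ : x * A₁ + c = y * B₁ + d) (h₂ : x * A₂ + c = y * B₂ + d) :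
    (c - d) * (B₁ - B₂) = x * (A₁ * B₂ - A₂ * B₁) := by
  linear_combination (-B₂) * h₁ + B₁ * h₂

theorem stmt_13_general (α1 α2 β1 β2 γ p10 p11 q0 q1 : ℝ)
    (hα : α2 < α1) (hβ : β2 < β1)
    (hγ : γ ∈ Set.Icc (0:ℝ) (1/2))
    (hαβ : α1 * β2 ≤ α2 * β1)
    (hcon1 : (p10 - q0) * ((1 - γ) * α1 + γ * β1) + q0
           = (p11 - q1) * ((1 - γ) * β1 + γ * α1) + q1)
    (hcon2 : (p10 - q0) * ((1 - γ) * α2 + γ * β2) + q0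
           = (p11 - q1) * ((1 - γ) * β2 + γ * α2) + q1)
    (hΔ : (p10 - q0) * (((1 - γ) * (α2 - α1) + γ * (β2 - β1)) / 2) ≤ 0) :
    q0 - q1 ≤ 0 := by
  obtain ⟨hγ₀, hγ₁⟩ := hγ
  have hu : ((1 - γ) * (α2 - α1) + γ * (β2 - β1)) / 2 < 0 := by
    linarith [mix_lt_mix hγ₀ (by linarith) hα hβ]
  have hx : 0 ≤ p10 - q0 := nonneg_of_mul_nonpos_left hΔ hu
  have hB := mix_lt_mix hγ₀ (by linarith) hβ hα
  refine nonpos_of_mul_nonpos_left ?_ (sub_pos.2 hB)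
  rw [sub_mul_sub_eq_of_affine_eq hcon1 hcon2, mix_det]
  exact mul_nonpos_of_nonneg_of_nonpos hx
    (mul_nonpos_of_nonneg_of_nonpos (by linarith) (by linarith))

theorem stmt_13 (α1 α2 β1 β2 γ p10 p11 q0 q1 : ℝ)
    (hα1 : α1 ∈ Set.Icc (0:ℝ) 1) (hα2 : α2 ∈ Set.Icc (0:ℝ) 1)
    (hβ1 : β1 ∈ Set.Icc (0:ℝ) 1) (hβ2 : β2 ∈ Set.Icc (0:ℝ) 1)
    (hα : α2 < α1) (hβ : β2 < β1)
    (hγ : γ ∈ Set.Icc (0:ℝ) (1/2))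
    (hαβ : α1 * β2 ≤ α2 * β1)
    (hcon1 : (p10 - q0) * ((1 - γ) * α1 + γ * β1) + q0
           = (p11 - q1) * ((1 - γ) * β1 + γ * α1) + q1)
    (hcon2 : (p10 - q0) * ((1 - γ) * α2 + γ * β2) + q0
           = (p11 - q1) * ((1 - γ) * β2 + γ * α2) + q1)
    (hu : ((1 - γ) * (α2 - α1) + γ * (β2 - β1)) / 2 ≠ 0)
    (hv : ((1 - γ) * (β2 - β1) + γ * (α2 - α1)) / 2 ≠ 0)
    (hΔ : (p10 - q0) * (((1 - γ) * (α2 - α1) + γ * (β2 - β1)) / 2) ≤ 0) :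
    q0 - q1 ≤ 0 :=
  stmt_13_general α1 α2 β1 β2 γ p10 p11 q0 q1 hα hβ hγ hαβ hcon1 hcon2 hΔ
end

section
/- (Balanced case: difference of the two '+1' mixing probabilities.) Suppose real numbers p10, p11, q1 satisfy, with q0 = 0, the two balanced equalized-odds constraints p10·((1−γ)α1 + γβ1) = (p11 − q1)·((1−γ)β1 + γα1) + q1 and p10·((1−γ)α2 + γβ2) = (p11 − q1)·((1−γ)β2 + γα2) + q1, and that u ≠ 0 and v ≠ 0. Then with Δ := p10·u one has p10 − p11 = Δ·(1−2γ)·(β2 − β1 + α1 − α2 + α2·β1 − α1·β2)/(2·u·v). -/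
/-!
With the perturbed rates `aᵢ = (1 - γ) αᵢ + γ βᵢ` and `bᵢ = (1 - γ) βᵢ + γ αᵢ`, subtracting the two
constraints gives `p₁₀ (a₂ - a₁) = (p₁₁ - q₁) (b₂ - b₁)`, and substituting back into the first
constraint eliminates `q₁`, leaving
`(p₁₀ - p₁₁) (b₂ - b₁) = p₁₀ ((b₂ - b₁) - (a₂ - a₁) + a₂ b₁ - a₁ b₂)`. For the perturbed rates this
bracket factors as `(1 - 2γ)` times the same bracket for the unperturbed rates, since swapping the
roles of `α` and `β` with probability `γ` scales every antisymmetric combination by `1 - 2γ`.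
-/

namespace EqualizedOdds

variable {R : Type*} [CommRing R]

theorem sub_mul_sub_eq_of_constraints {p p' q a₁ a₂ b₁ b₂ : R}
    (h₁ : p * a₁ = (p' - q) * b₁ + q) (h₂ : p * a₂ = (p' - q) * b₂ + q) :
    (p - p') * (b₂ - b₁) = p * ((b₂ - b₁) - (a₂ - a₁) + a₂ * b₁ - a₁ * b₂) := by
  linear_combination (b₂ - b₁) * h₁ + (1 - b₁) * (h₂ - h₁)

theorem perturbed_rates_bracket (γ α₁ α₂ β₁ β₂ : R) :
    (((1 - γ) * β₂ + γ * α₂) - ((1 - γ) * β₁ + γ * α₁))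
      - (((1 - γ) * α₂ + γ * β₂) - ((1 - γ) * α₁ + γ * β₁))
      + ((1 - γ) * α₂ + γ * β₂) * ((1 - γ) * β₁ + γ * α₁)
      - ((1 - γ) * α₁ + γ * β₁) * ((1 - γ) * β₂ + γ * α₂)
      = (1 - 2 * γ) * (β₂ - β₁ + α₁ - α₂ + α₂ * β₁ - α₁ * β₂) := by
  ring

end EqualizedOdds

open EqualizedOdds in
theorem stmt_14_general (α1 α2 β1 β2 γ p10 p11 q1 : ℝ)
    (hcon1 : p10 * ((1 - γ) * α1 + γ * β1)
           = (p11 - q1) * ((1 - γ) * β1 + γ * α1) + q1)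
    (hcon2 : p10 * ((1 - γ) * α2 + γ * β2)
           = (p11 - q1) * ((1 - γ) * β2 + γ * α2) + q1)
    (hu : ((1 - γ) * (α2 - α1) + γ * (β2 - β1)) / 2 ≠ 0)
    (hv : ((1 - γ) * (β2 - β1) + γ * (α2 - α1)) / 2 ≠ 0) :
    p10 - p11 = (p10 * (((1 - γ) * (α2 - α1) + γ * (β2 - β1)) / 2))
        * (1 - 2 * γ) * (β2 - β1 + α1 - α2 + α2 * β1 - α1 * β2) /
        (2 * (((1 - γ) * (α2 - α1) + γ * (β2 - β1)) / 2)
           * (((1 - γ) * (β2 - β1) + γ * (α2 - α1)) / 2)) := by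
  have key := sub_mul_sub_eq_of_constraints hcon1 hcon2
  rw [perturbed_rates_bracket] at key
  rw [eq_div_iff (mul_ne_zero (mul_ne_zero two_ne_zero hu) hv)]
  linear_combination (((1 - γ) * (α2 - α1) + γ * (β2 - β1)) / 2) * key

theorem stmt_14 (α1 α2 β1 β2 γ p10 p11 q1 : ℝ)
    (hα1 : α1 ∈ Set.Icc (0:ℝ) 1) (hα2 : α2 ∈ Set.Icc (0:ℝ) 1)
    (hβ1 : β1 ∈ Set.Icc (0:ℝ) 1) (hβ2 : β2 ∈ Set.Icc (0:ℝ) 1)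
    (hγ : γ ∈ Set.Icc (0:ℝ) 1)
    (hcon1 : p10 * ((1 - γ) * α1 + γ * β1)
           = (p11 - q1) * ((1 - γ) * β1 + γ * α1) + q1)
    (hcon2 : p10 * ((1 - γ) * α2 + γ * β2)
           = (p11 - q1) * ((1 - γ) * β2 + γ * α2) + q1)
    (hu : ((1 - γ) * (α2 - α1) + γ * (β2 - β1)) / 2 ≠ 0)
    (hv : ((1 - γ) * (β2 - β1) + γ * (α2 - α1)) / 2 ≠ 0) :
    p10 - p11 = (p10 * (((1 - γ) * (α2 - α1) + γ * (β2 - β1)) / 2))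
        * (1 - 2 * γ) * (β2 - β1 + α1 - α2 + α2 * β1 - α1 * β2) /
        (2 * (((1 - γ) * (α2 - α1) + γ * (β2 - β1)) / 2)
           * (((1 - γ) * (β2 - β1) + γ * (α2 - α1)) / 2)) :=
  stmt_14_general α1 α2 β1 β2 γ p10 p11 q1 hcon1 hcon2 hu hv
end

section
/- (Case 1 error difference.) For all real α1, α2, β1, β2 and γ with v ≠ 0, where u = ((1−γ)·(α2−α1) + γ·(β2−β1))/2 and v = ((1−γ)·(β2−β1) + γ·(α2−α1))/2, one has the identity (α2 − α1) − (u/v)·(β2 − β1) = γ·((α2−α1)² − (β2−β1)²)/(2v). Moreover, if α1 > α2, β1 > β2, β1 − β2 > α1 − α2, and γ ∈ (0, 1/2], then this quantity is strictly positive. -/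
/-!
Write `a = α₂ - α₁`, `b = β₂ - β₁` and `v = ((1 - γ) b + γ a) / 2`. Clearing the
denominator `v`, `a v - u b = γ (a² - b²) / 2`. Under the Case 1 hypotheses `b < a < 0`, so
`a² < b²` and the numerator is negative, while `v` is a convex combination of negative numbers,
hence negative too.
-/

section Mixture

variable {K : Type*}

theorem sub_mix_div_mix_mul [Field K] (a b γ : K) (hv : (1 - γ) * b + γ * a ≠ 0) :
    a - ((1 - γ) * a + γ * b) / ((1 - γ) * b + γ * a) * b
      = γ * (a ^ 2 - b ^ 2) / ((1 - γ) * b + γ * a) := by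
  rw [eq_div_iff hv, sub_mul, div_mul_eq_mul_div, div_mul_cancel₀ _ hv]
  ring

variable [Field K] [LinearOrder K] [IsStrictOrderedRing K]

theorem mix_neg {a b γ : K} (ha : a < 0) (hb : b < 0) (hγ₀ : 0 ≤ γ) (hγ₁ : γ ≤ 1) :
    (1 - γ) * b + γ * a < 0 := by
  rcases hγ₀.eq_or_lt with rfl | hγ
  · simpa using hb
  · linarith [mul_neg_of_pos_of_neg hγ ha,
      mul_nonpos_of_nonneg_of_nonpos (sub_nonneg.2 hγ₁) hb.le]

theorem mul_sq_sub_sq_div_mix_pos {a b γ : K} (ha : a < 0) (hba : b < a) (hγ₀ : 0 < γ)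
    (hγ₁ : γ ≤ 1) : 0 < γ * (a ^ 2 - b ^ 2) / ((1 - γ) * b + γ * a) := by
  have hsq : a ^ 2 - b ^ 2 < 0 := by nlinarith
  exact div_pos_of_neg_of_neg (mul_neg_of_pos_of_neg hγ₀ hsq)
    (mix_neg ha (hba.trans ha) hγ₀.le hγ₁)

end Mixture

theorem stmt_16 (α1 α2 β1 β2 γ : ℝ)
    (hv : ((1 - γ) * (β2 - β1) + γ * (α2 - α1)) / 2 ≠ 0) :
    ((α2 - α1) - ((((1 - γ) * (α2 - α1) + γ * (β2 - β1)) / 2)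
        / (((1 - γ) * (β2 - β1) + γ * (α2 - α1)) / 2)) * (β2 - β1)
      = γ * ((α2 - α1) ^ 2 - (β2 - β1) ^ 2) /
          (2 * (((1 - γ) * (β2 - β1) + γ * (α2 - α1)) / 2))) ∧
    (α2 < α1 → β2 < β1 → α1 - α2 < β1 - β2 → 0 < γ → γ ≤ 1/2 →
      0 < (α2 - α1) - ((((1 - γ) * (α2 - α1) + γ * (β2 - β1)) / 2)
        / (((1 - γ) * (β2 - β1) + γ * (α2 - α1)) / 2)) * (β2 - β1)) := by
  have hv' : (1 - γ) * (β2 - β1) + γ * (α2 - α1) ≠ 0 := by simpa using hv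
  have hid := sub_mix_div_mix_mul (α2 - α1) (β2 - β1) γ hv'
  rw [div_div_div_cancel_right₀ two_ne_zero, mul_div_cancel₀ _ two_ne_zero]
  refine ⟨hid, fun hα hβ hαβ hγ₀ hγ₁ => ?_⟩
  rw [hid]
  exact mul_sq_sub_sq_div_mix_pos (by linarith) (by linarith) hγ₀ (by linarith)
end

section
/- (Case 2 main inequality.) Let α1, α2, β1, β2 ∈ [0,1] satisfy α1 > α2, β1 > β2, α2·β1 ≥ α1·β2 and β2 − β1 + α1 − α2 + α2·β1 − α1·β2 ≥ 0, and let γ0 ∈ (0, 1/2]. Then both denominators below are strictly positive and ( γ0·(β1 − β2 − α1 + α2)² + 2·(β1 − β2)·(α1 − α2) ) / ( (1−γ0)·(α1−α2) + γ0·(β1−β2) + (1−2γ0)·(α2·β1 − α1·β2) ) ≥ 2·(β1 − β2)·(α1 − α2) / ( (α1 − α2) + (α2·β1 − α1·β2) ), with equality if and only if α1 = β1 and α2 = β2. -/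
/-!
Write `a = α1 - α2`, `b = β1 - β2`, `c = α2 β1 - α1 β2`; the hypotheses say `a, b > 0` and
`c ≥ max 0 (b - a)`. Cross-multiplying the two fractions, the difference of the products is
`γ (a + b) (a (a - b) + c (a + b))`, and `c ≥ max 0 (b - a)` bounds the last factor below by
`a (a - b)` and by `b (b - a)`, one of which is positive unless `a = b`, in which case it is
`2 a c`.
-/

section CrossTerm

variable {a b c : ℝ}

lemma cross_term_nonneg (ha : 0 < a) (hb : 0 < b) (hc : 0 ≤ c) (hbc : b - a ≤ c) :
    0 ≤ a * (a - b) + c * (a + b) := by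
  rcases le_total a b with hab | hba
  · nlinarith [mul_le_mul_of_nonneg_right hbc (by linarith : 0 ≤ a + b)]
  · nlinarith [mul_nonneg hc (by linarith : 0 ≤ a + b)]

lemma cross_term_eq_zero_iff (ha : 0 < a) (hb : 0 < b) (hc : 0 ≤ c) (hbc : b - a ≤ c) :
    a * (a - b) + c * (a + b) = 0 ↔ a = b ∧ c = 0 := by
  refine ⟨fun h => ?_, fun ⟨hab, hc0⟩ => by rw [hab, hc0]; ring⟩
  have hab : a = b := by
    rcases lt_trichotomy a b with hlt | heq | hgt
    · nlinarith [mul_le_mul_of_nonneg_right hbc (by linarith : 0 ≤ a + b)]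
    · exact heq
    · nlinarith [mul_nonneg hc (by linarith : 0 ≤ a + b)]
  subst hab
  exact ⟨rfl, by nlinarith⟩

end CrossTerm

lemma ratio_le_perturbed_ratio_and_eq_iff {a b c γ : ℝ} (ha : 0 < a) (hb : 0 < b) (hc : 0 ≤ c)
    (hbc : b - a ≤ c) (hγ : 0 < γ) (hγ2 : γ ≤ 1 / 2) :
    0 < (1 - γ) * a + γ * b + (1 - 2 * γ) * c ∧ 0 < a + c ∧
    2 * b * a / (a + c)
      ≤ (γ * (b - a) ^ 2 + 2 * b * a) / ((1 - γ) * a + γ * b + (1 - 2 * γ) * c) ∧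
    ((γ * (b - a) ^ 2 + 2 * b * a) / ((1 - γ) * a + γ * b + (1 - 2 * γ) * c)
        = 2 * b * a / (a + c) ↔ a = b ∧ c = 0) := by
  have hD : 0 < (1 - γ) * a + γ * b + (1 - 2 * γ) * c := by nlinarith
  have hD' : 0 < a + c := by linarith
  have hab : 0 < a + b := by linarith
  have cross_mul_sub : (γ * (b - a) ^ 2 + 2 * b * a) * (a + c)
      - 2 * b * a * ((1 - γ) * a + γ * b + (1 - 2 * γ) * c)
      = γ * (a + b) * (a * (a - b) + c * (a + b)) := by ring
  have hK := cross_term_nonneg ha hb hc hbc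
  refine ⟨hD, hD', ?_, ?_⟩
  · rw [div_le_div_iff₀ hD' hD]
    linarith [mul_nonneg (mul_nonneg hγ.le hab.le) hK]
  · rw [div_eq_div_iff hD.ne' hD'.ne', ← sub_eq_zero, cross_mul_sub,
      mul_eq_zero, mul_eq_zero, or_iff_right hγ.ne', or_iff_right hab.ne']
    exact cross_term_eq_zero_iff ha hb hc hbc

lemma sub_eq_sub_and_cross_eq_zero_iff {α1 α2 β1 β2 : ℝ} (hα : α2 < α1) :
    (α1 - α2 = β1 - β2 ∧ α2 * β1 - α1 * β2 = 0) ↔ (α1 = β1 ∧ α2 = β2) := by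
  constructor
  · rintro ⟨hsub, hcross⟩
    have h : (α1 - α2) * (α2 - β2) = 0 := by linear_combination hcross + α2 * hsub
    have hα2 : α2 = β2 := by
      linarith [(mul_eq_zero.1 h).resolve_left (sub_ne_zero.2 hα.ne')]
    exact ⟨by linarith, hα2⟩
  · rintro ⟨rfl, rfl⟩
    exact ⟨rfl, by ring⟩

theorem stmt_19_general (α1 α2 β1 β2 γ0 : ℝ)
    (hα : α2 < α1) (hβ : β2 < β1)
    (hαβ : α1 * β2 ≤ α2 * β1)
    (hcase : 0 ≤ β2 - β1 + α1 - α2 + α2 * β1 - α1 * β2)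
    (hγ0 : γ0 ∈ Set.Ioc (0:ℝ) (1/2)) :
    0 < (1 - γ0) * (α1 - α2) + γ0 * (β1 - β2) + (1 - 2 * γ0) * (α2 * β1 - α1 * β2) ∧
    0 < (α1 - α2) + (α2 * β1 - α1 * β2) ∧
    (2 * (β1 - β2) * (α1 - α2) / ((α1 - α2) + (α2 * β1 - α1 * β2))
      ≤ (γ0 * (β1 - β2 - α1 + α2) ^ 2 + 2 * (β1 - β2) * (α1 - α2)) /
          ((1 - γ0) * (α1 - α2) + γ0 * (β1 - β2) + (1 - 2 * γ0) * (α2 * β1 - α1 * β2))) ∧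
    ((γ0 * (β1 - β2 - α1 + α2) ^ 2 + 2 * (β1 - β2) * (α1 - α2)) /
          ((1 - γ0) * (α1 - α2) + γ0 * (β1 - β2) + (1 - 2 * γ0) * (α2 * β1 - α1 * β2))
        = 2 * (β1 - β2) * (α1 - α2) / ((α1 - α2) + (α2 * β1 - α1 * β2))
      ↔ (α1 = β1 ∧ α2 = β2)) := by
  rw [show β1 - β2 - α1 + α2 = (β1 - β2) - (α1 - α2) by ring]
  obtain ⟨hD, hD', hle, heq⟩ :=
    ratio_le_perturbed_ratio_and_eq_iff (sub_pos.2 hα) (sub_pos.2 hβ) (sub_nonneg.2 hαβ)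
      (by linarith) hγ0.1 hγ0.2
  exact ⟨hD, hD', hle, heq.trans (sub_eq_sub_and_cross_eq_zero_iff hα)⟩

theorem stmt_19 (α1 α2 β1 β2 γ0 : ℝ)
    (hα1 : α1 ∈ Set.Icc (0:ℝ) 1) (hα2 : α2 ∈ Set.Icc (0:ℝ) 1)
    (hβ1 : β1 ∈ Set.Icc (0:ℝ) 1) (hβ2 : β2 ∈ Set.Icc (0:ℝ) 1)
    (hα : α2 < α1) (hβ : β2 < β1)
    (hαβ : α1 * β2 ≤ α2 * β1)
    (hcase : 0 ≤ β2 - β1 + α1 - α2 + α2 * β1 - α1 * β2)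
    (hγ0 : γ0 ∈ Set.Ioc (0:ℝ) (1/2)) :
    0 < (1 - γ0) * (α1 - α2) + γ0 * (β1 - β2) + (1 - 2 * γ0) * (α2 * β1 - α1 * β2) ∧
    0 < (α1 - α2) + (α2 * β1 - α1 * β2) ∧
    (2 * (β1 - β2) * (α1 - α2) / ((α1 - α2) + (α2 * β1 - α1 * β2))
      ≤ (γ0 * (β1 - β2 - α1 + α2) ^ 2 + 2 * (β1 - β2) * (α1 - α2)) /
          ((1 - γ0) * (α1 - α2) + γ0 * (β1 - β2) + (1 - 2 * γ0) * (α2 * β1 - α1 * β2))) ∧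
    ((γ0 * (β1 - β2 - α1 + α2) ^ 2 + 2 * (β1 - β2) * (α1 - α2)) /
          ((1 - γ0) * (α1 - α2) + γ0 * (β1 - β2) + (1 - 2 * γ0) * (α2 * β1 - α1 * β2))
        = 2 * (β1 - β2) * (α1 - α2) / ((α1 - α2) + (α2 * β1 - α1 * β2))
      ↔ (α1 = β1 ∧ α2 = β2)) :=
  stmt_19_general α1 α2 β1 β2 γ0 hα hβ hαβ hcase hγ0
end
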